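/- arXiv:2108.06917 — 5 statements merged into one kernel-verified Lean document; each statement's English description precedes it below -/
import Mathlib

section
/- If M ∈ ℝ^{n×n} is in class R₀, then the map f_M(x) = [x]^+ − M[−x]^+ is proper: for every compact set K ⊆ ℝ^n, the preimage f_M^{-1}(K) is compact. Equivalently, f_M(x) = 0 implies x = 0 and f_M is coercive on each orthant. -/
open Matrix Set

/-- Componentwise positive part. -/
noncomputable def posPart' {n : ℕ} (x : Fin n → ℝ) : Fin n → ℝ := fun i => max (x i) 0

/-- The piecewise-linear map `f_M(x) = [x]^+ - M [-x]^+`. -/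
noncomputable def fPL {n : ℕ} (M : Matrix (Fin n) (Fin n) ℝ) (x : Fin n → ℝ) : Fin n → ℝ :=
  posPart' x - M.mulVec (posPart' (-x))

/-- The complementary matrix `C_M(α)`: columns `-M_{·,j}` for `j ∈ α`, `I_{·,j}` otherwise. -/
def compMat {n : ℕ} (M : Matrix (Fin n) (Fin n) ℝ) (α : Finset (Fin n)) :
    Matrix (Fin n) (Fin n) ℝ :=
  Matrix.of fun i j => if j ∈ α then -M i j else (1 : Matrix (Fin n) (Fin n) ℝ) i j

/-- The cone generated by the columns of a matrix. -/
def posCone {n : ℕ} {m : Type*} [Fintype m] (A : Matrix (Fin n) m ℝ) : Set (Fin n → ℝ) :=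
  { x | ∃ p : m → ℝ, (∀ j, 0 ≤ p j) ∧ x = A.mulVec p }

/-- `M` belongs to the class `R₀`. -/
def isR0 {n : ℕ} (M : Matrix (Fin n) (Fin n) ℝ) : Prop :=
  ∀ α : Finset (Fin n), ∀ x : Fin n → ℝ,
    (compMat M α).mulVec x = 0 → (∀ i, 0 ≤ x i) → x = 0

lemma fPL_continuous {n : ℕ} (M : Matrix (Fin n) (Fin n) ℝ) : Continuous (fPL M) := by
  have hp : Continuous (fun x : Fin n → ℝ => posPart' x) := by
    apply continuous_pi; intro i
    exact (continuous_apply i).max continuous_const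
  have hmv : Continuous (fun v : Fin n → ℝ => M.mulVec v) :=
    (M.mulVecLin).continuous_of_finiteDimensional
  exact hp.sub (hmv.comp (hp.comp continuous_neg))

lemma fPL_smul {n : ℕ} (M : Matrix (Fin n) (Fin n) ℝ) {t : ℝ} (ht : 0 ≤ t)
    (x : Fin n → ℝ) : fPL M (t • x) = t • fPL M x := by
  have hp : ∀ y : Fin n → ℝ, posPart' (t • y) = t • posPart' y := by
    intro y; funext i
    simp only [posPart', Pi.smul_apply, smul_eq_mul]
    rw [mul_max_of_nonneg _ _ ht, mul_zero]
  unfold fPL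
  rw [← smul_neg, hp, hp, Matrix.mulVec_smul, smul_sub]

lemma fPL_eq_zero {n : ℕ} (M : Matrix (Fin n) (Fin n) ℝ) (hM : isR0 M)
    {x : Fin n → ℝ} (hx : fPL M x = 0) : x = 0 := by
  set α : Finset (Fin n) := Finset.univ.filter (fun i => x i < 0) with hα
  set z : Fin n → ℝ := fun i => |x i| with hz
  have key : (compMat M α).mulVec z = fPL M x := by
    funext i
    simp only [fPL, Pi.sub_apply, Matrix.mulVec, dotProduct, compMat, Matrix.of_apply]
    have hone : posPart' x i = ∑ j, (1 : Matrix (Fin n) (Fin n) ℝ) i j * posPart' x j := by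
      simp [Matrix.one_apply]
    rw [hone, ← Finset.sum_sub_distrib]
    apply Finset.sum_congr rfl
    intro j _
    by_cases hj : j ∈ α
    · have hxj : x j < 0 := by simpa [hα] using hj
      simp only [hj, if_pos]
      have h1 : posPart' x j = 0 := by simp [posPart', le_of_lt hxj]
      have h2 : posPart' (-x) j = -x j := by simp [posPart', le_of_lt hxj]
      have h3 : z j = -x j := abs_of_neg hxj
      rw [h1]
      simp only [Matrix.one_apply]
      rw [h2, h3]
      ring
    · have hxj : 0 ≤ x j := by
        by_contra h; exact hj (by simp [hα]; linarith)
      simp only [hj, if_neg, if_false]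
      have h1 : posPart' x j = x j := by simp [posPart', hxj]
      have h2 : posPart' (-x) j = 0 := by simp [posPart']; linarith
      have h3 : z j = x j := abs_of_nonneg hxj
      rw [h1, h2, h3, mul_zero, sub_zero]
  have hzz := hM α z (by rw [key, hx]) (fun i => abs_nonneg _)
  funext i
  have := congrFun hzz i
  simpa [hz, abs_eq_zero] using this

lemma fPL_lower {n : ℕ} (M : Matrix (Fin n) (Fin n) ℝ) (hM : isR0 M) :
    ∃ c : ℝ, 0 < c ∧ ∀ x : Fin n → ℝ, c * ‖x‖ ≤ ‖fPL M x‖ := by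
  by_cases hS : (Metric.sphere (0 : Fin n → ℝ) 1).Nonempty
  · obtain ⟨y, hy, hmin⟩ := (isCompact_sphere (0 : Fin n → ℝ) 1).exists_isMinOn hS
      ((continuous_norm.comp (fPL_continuous M)).continuousOn)
    have hy1 : ‖y‖ = 1 := by simpa using hy
    refine ⟨‖fPL M y‖, ?_, ?_⟩
    · rw [norm_pos_iff]
      intro h
      have := fPL_eq_zero M hM h
      rw [this] at hy1; simp at hy1
    · intro x
      rcases eq_or_ne x 0 with rfl | hx
      · simp
      · have hnx : (0:ℝ) < ‖x‖ := norm_pos_iff.mpr hx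
        set u : Fin n → ℝ := ‖x‖⁻¹ • x with hu
        have hun : ‖u‖ = 1 := by
          rw [hu, norm_smul, norm_inv, norm_norm, inv_mul_cancel₀ hnx.ne']
        have hxu : x = ‖x‖ • u := by
          rw [hu, smul_smul, mul_inv_cancel₀ hnx.ne', one_smul]
        have : ‖fPL M x‖ = ‖x‖ * ‖fPL M u‖ := by
          conv_lhs => rw [hxu]
          rw [fPL_smul M hnx.le, norm_smul, norm_norm]
        rw [this, mul_comm ‖x‖]
        have husph : u ∈ Metric.sphere (0 : Fin n → ℝ) 1 := by simpa using hun
        exact mul_le_mul_of_nonneg_right (hmin husph) hnx.le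
  · refine ⟨1, one_pos, fun x => ?_⟩
    have hx : x = 0 := by
      by_contra h
      have hnx : (0:ℝ) < ‖x‖ := norm_pos_iff.mpr h
      exact hS ⟨‖x‖⁻¹ • x, by
        simp [norm_smul, inv_mul_cancel₀ hnx.ne']⟩
    simp [hx]


/-- if `M` is `R₀`, then `f_M` is proper: preimages of compact sets
are compact. -/
theorem stmt7 {n : ℕ} (M : Matrix (Fin n) (Fin n) ℝ) (hM : isR0 M) :
    ∀ K : Set (Fin n → ℝ), IsCompact K → IsCompact (fPL M ⁻¹' K) := by
  intro K hK
  obtain ⟨c, hc, hlow⟩ := fPL_lower M hM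
  obtain ⟨R, hR⟩ := (isBounded_iff_forall_norm_le).mp hK.isBounded
  refine Metric.isCompact_of_isClosed_isBounded
    (hK.isClosed.preimage (fPL_continuous M)) ?_
  rw [isBounded_iff_forall_norm_le]
  refine ⟨R / c, fun x hx => ?_⟩
  rw [le_div_iff₀ hc, mul_comm]
  exact le_trans (hlow x) (hR _ hx)
end

section
/- If every minor of M ∈ ℝ^{n×n} (of every size, over all row and column index sets of equal cardinality) is nonzero, then every subset of n vectors taken from the 2n columns {I_{·,1},…,I_{·,n}, −M_{·,1},…,−M_{·,n}} that contains at most one of each complementary pair is linearly independent; in particular every complementary matrix C_M(α) is nonsingular. -/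
open Matrix Set

/-- if every minor of `M` is nonzero, then for every `α` the `n` columns of the
complementary matrix `C_M(α)` — i.e. any choice of one vector from each complementary pair
`{I_{·,j}, -M_{·,j}}` — are linearly independent; in particular `C_M(α)` is nonsingular. -/
theorem stmt9 {n : ℕ} (M : Matrix (Fin n) (Fin n) ℝ)
    (hminor : ∀ (k : ℕ), 0 < k → ∀ (α β : Finset (Fin n)) (hα : α.card = k) (hβ : β.card = k),
      Matrix.det (M.submatrix (fun i : Fin k => ((α.orderIsoOfFin hα i : α) : Fin n))
        (fun j : Fin k => ((β.orderIsoOfFin hβ j : β) : Fin n))) ≠ 0) :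
    ∀ α : Finset (Fin n),
      LinearIndependent ℝ (fun j : Fin n => (fun i => compMat M α i j)) ∧
      (compMat M α).det ≠ 0 := by
  intro α
  classical
  have hdet : (compMat M α).det ≠ 0 := by
    set A : Matrix {x // x ∈ α} {x // x ∈ α} ℝ := Matrix.of fun i j => M i.1 j.1 with hA
    have hsub : det (M.submatrix (fun i : {x // x ∈ α} => (i : Fin n))
        (fun j : {x // x ∈ α} => (j : Fin n))) ≠ 0 := by
      rcases eq_or_ne α.card 0 with h0 | h0
      · have : IsEmpty {x // x ∈ α} := by
          rw [Finset.card_eq_zero] at h0; subst h0; simp; exact ⟨fun x => x.2⟩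
        simp [Matrix.det_isEmpty]
      · have hk : 0 < α.card := Nat.pos_of_ne_zero h0
        have := hminor α.card hk α α rfl rfl
        have he : (M.submatrix (fun i : Fin α.card => ((α.orderIsoOfFin rfl i : α) : Fin n))
            (fun j : Fin α.card => ((α.orderIsoOfFin rfl j : α) : Fin n)))
            = (M.submatrix (fun i : {x // x ∈ α} => (i : Fin n))
              (fun j : {x // x ∈ α} => (j : Fin n))).submatrix
              (α.orderIsoOfFin rfl).toEquiv (α.orderIsoOfFin rfl).toEquiv := rfl
        rw [he, Matrix.det_submatrix_equiv_self] at this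
        exact this
    -- reindex
    let e : {x // x ∈ α} ⊕ {x // x ∉ α} ≃ Fin n := Equiv.sumCompl (· ∈ α)
    have hblock : (compMat M α).submatrix e e =
        Matrix.fromBlocks (-A)
          (0 : Matrix {x // x ∈ α} {x // x ∉ α} ℝ)
          (Matrix.of fun (i : {x // x ∉ α}) (j : {x // x ∈ α}) => -M i.1 j.1)
          (1 : Matrix {x // x ∉ α} {x // x ∉ α} ℝ) := by
      ext i j
      rcases i with i | i <;> rcases j with j | j <;>
        simp only [Matrix.submatrix_apply, Equiv.sumCompl_apply_inl,
          Equiv.sumCompl_apply_inr, compMat, Matrix.of_apply, Matrix.fromBlocks_apply₁₁,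
          Matrix.fromBlocks_apply₁₂, Matrix.fromBlocks_apply₂₁, Matrix.fromBlocks_apply₂₂,
          e]
      · simp [hA, j.2]
      · rw [if_neg j.2, Matrix.one_apply_ne, Matrix.zero_apply]
        exact fun h => absurd (h ▸ i.2) j.2
      · simp [j.2]
      · rw [if_neg j.2]
        simp [Matrix.one_apply, Subtype.ext_iff]
    have : (compMat M α).det = (-A).det * 1 := by
      rw [← Matrix.det_submatrix_equiv_self e, hblock,
        Matrix.det_fromBlocks_zero₁₂, Matrix.det_one]
    rw [this, mul_one, Matrix.det_neg]
    have hAne : A.det ≠ 0 := hsub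
    intro h
    rcases mul_eq_zero.mp h with h | h
    · exact pow_ne_zero _ (by norm_num : (-1 : ℝ) ≠ 0) h
    · exact hAne h
  refine ⟨?_, hdet⟩
  have := Matrix.linearIndependent_cols_iff_isUnit.mpr
    ((Matrix.isUnit_iff_isUnit_det _).mpr (isUnit_iff_ne_zero.mpr hdet))
  exact this
end

section
/- The set of weakly degenerate matrices is nowhere dense in ℝ^{n×n}: its closure has empty interior. -/
open Matrix Set

/-- The facet of the complementary cone `pos C_M(α)` obtained by deleting column `i`. -/
def facet {n : ℕ} (M : Matrix (Fin n) (Fin n) ℝ) (α : Finset (Fin n)) (i : Fin n) :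
    Set (Fin n → ℝ) :=
  posCone (Matrix.of fun r (j : {j : Fin n // j ≠ i}) => compMat M α r (j : Fin n))

/-- `M` is weakly degenerate: some complementary matrix is singular, or for some `k` the
column `-M_{·,k}` lies in a facet `pos C_M(α)_{·,i^c}` with `k ∉ α`. -/
def weaklyDegenerate {n : ℕ} (M : Matrix (Fin n) (Fin n) ℝ) : Prop :=
  (∃ α : Finset (Fin n), ¬ IsUnit (compMat M α).det) ∨
  (∃ (k : Fin n) (α : Finset (Fin n)) (i : Fin n),
      k ∉ α ∧ (fun r => -M r k) ∈ facet M α i)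

open Polynomial

section Aux

variable {n : ℕ}

/-- finite intersection of open dense sets is dense -/
lemma aux_dense_biInter {X : Type*} [TopologicalSpace X] {ι : Type*} [DecidableEq ι]
    (s : Finset ι) (f : ι → Set X) (ho : ∀ i, IsOpen (f i)) (hd : ∀ i, Dense (f i)) :
    Dense (⋂ i ∈ s, f i) := by
  induction s using Finset.induction with
  | empty => simpa using dense_univ
  | @insert a s ha ih =>
    rw [Finset.set_biInter_insert]
    exact (hd a).inter_of_isOpen_left ih (ho a)

lemma aux_dense_iInter {X : Type*} [TopologicalSpace X] {ι : Type*} [Fintype ι] [DecidableEq ι]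
    (f : ι → Set X) (ho : ∀ i, IsOpen (f i)) (hd : ∀ i, Dense (f i)) :
    Dense (⋂ i, f i) := by
  have := aux_dense_biInter (Finset.univ : Finset ι) f ho hd
  simpa using this

noncomputable def linPoly (M D : Matrix (Fin n) (Fin n) ℝ) : Matrix (Fin n) (Fin n) ℝ[X] :=
  Matrix.of fun i j => C (M i j) + X * C (D i j)

lemma map_linPoly (M D : Matrix (Fin n) (Fin n) ℝ) (t : ℝ) :
    (linPoly M D).map (eval t) = M + t • D := by
  ext i j
  simp only [linPoly, Matrix.map_apply, Matrix.of_apply, eval_add, eval_C, eval_mul, eval_X,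
    Matrix.add_apply, Matrix.smul_apply, smul_eq_mul]

noncomputable def compMatP (A : Matrix (Fin n) (Fin n) ℝ[X]) (α : Finset (Fin n)) :
    Matrix (Fin n) (Fin n) ℝ[X] :=
  Matrix.of fun i j => if j ∈ α then -A i j else (1 : Matrix (Fin n) (Fin n) ℝ[X]) i j

lemma map_compMatP (A : Matrix (Fin n) (Fin n) ℝ[X]) (α : Finset (Fin n)) (t : ℝ) :
    (compMatP A α).map (eval t) = compMat (A.map (eval t)) α := by
  ext i j
  simp only [compMatP, compMat, Matrix.map_apply, Matrix.of_apply, Matrix.one_apply]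
  split_ifs <;> simp

lemma map_updateCol (A : Matrix (Fin n) (Fin n) ℝ[X]) (i : Fin n) (c : Fin n → ℝ[X]) (t : ℝ) :
    (A.updateCol i c).map (eval t) =
      (A.map (eval t)).updateCol i (fun r => eval t (c r)) := by
  ext r j
  by_cases h : j = i
  · subst h; simp [Matrix.updateCol_self, Matrix.map_apply]
  · simp [Matrix.updateCol_ne h, Matrix.map_apply]

lemma aux_eval_det (A : Matrix (Fin n) (Fin n) ℝ[X]) (t : ℝ) :
    eval t A.det = (A.map (eval t)).det := by
  have := RingHom.map_det (evalRingHom t) A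
  simpa [RingHom.mapMatrix_apply] using this

/-- key density lemma -/
lemma aux_dense_ne_zero (f : Matrix (Fin n) (Fin n) ℝ → ℝ)
    (h : ∀ M : Matrix (Fin n) (Fin n) ℝ, ∃ D : Matrix (Fin n) (Fin n) ℝ, ∃ p : ℝ[X],
      p ≠ 0 ∧ ∀ t : ℝ, p.eval t = f (M + t • D)) :
    Dense {M : Matrix (Fin n) (Fin n) ℝ | f M ≠ 0} := by
  intro M
  rw [mem_closure_iff_nhds]
  intro U hU
  obtain ⟨D, p, hp0, hp⟩ := h M
  have hg : Continuous fun t : ℝ => M + t • D :=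
    continuous_const.add (continuous_id.smul continuous_const)
  have hV : (fun t : ℝ => M + t • D) ⁻¹' U ∈ nhds (0 : ℝ) := by
    apply hg.continuousAt.preimage_mem_nhds
    simpa using hU
  have hVinf : ((fun t : ℝ => M + t • D) ⁻¹' U).Infinite := infinite_of_mem_nhds 0 hV
  have hroots : {t : ℝ | p.IsRoot t}.Finite := p.finite_setOf_isRoot hp0
  obtain ⟨t, htV, htR⟩ := (hVinf.diff hroots).nonempty
  refine ⟨M + t • D, htV, ?_⟩
  simp only [mem_setOf_eq]
  rw [← hp t]
  exact htR

end Aux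

section Main

variable {n : ℕ}

/-- the second matrix whose singularity is implied by facet membership -/
def matB (M : Matrix (Fin n) (Fin n) ℝ) (k : Fin n) (α : Finset (Fin n)) (i : Fin n) :
    Matrix (Fin n) (Fin n) ℝ :=
  (compMat M α).updateCol i fun r => -M r k

lemma facet_det_zero {M : Matrix (Fin n) (Fin n) ℝ} {k : Fin n} {α : Finset (Fin n)}
    {i : Fin n} (h : (fun r => -M r k) ∈ facet M α i) : (matB M k α i).det = 0 := by
  classical
  obtain ⟨p, -, hp⟩ := h
  rw [← Matrix.exists_mulVec_eq_zero_iff]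
  refine ⟨fun j => if hj : j = i then -1 else p ⟨j, hj⟩, ?_, ?_⟩
  · intro h0
    have := congrFun h0 i
    simp at this
  · ext r
    have hmv := congrFun hp r
    simp only [Matrix.mulVec, dotProduct, Matrix.of_apply, Pi.zero_apply] at hmv ⊢
    rw [← Finset.sum_erase_add _ _ (Finset.mem_univ i)]
    have h1 : ∑ j ∈ Finset.univ.erase i,
        matB M k α i r j * (if hj : j = i then (-1 : ℝ) else p ⟨j, hj⟩) =
        ∑ j : {j : Fin n // j ≠ i}, compMat M α r j * p j := by
      rw [Finset.sum_subtype (p := fun j => j ≠ i) (Finset.univ.erase i)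
        (fun j => by simp [Finset.mem_erase]) (fun j => matB M k α i r j *
          (if hj : j = i then (-1 : ℝ) else p ⟨j, hj⟩))]
      refine Finset.sum_congr rfl fun j _ => ?_
      rw [dif_neg j.2]
      congr 1
      exact Matrix.updateCol_ne j.2
    rw [h1, ← hmv, dif_pos rfl]
    have h2 : matB M k α i r i = -M r k := Matrix.updateCol_self
    rw [h2]
    ring

lemma compMat_neg_one (α : Finset (Fin n)) : compMat (-1 : Matrix (Fin n) (Fin n) ℝ) α = 1 := by
  ext i j
  simp only [compMat, Matrix.of_apply, Matrix.neg_apply, neg_neg]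
  split_ifs <;> rfl

/-- witness for the second family -/
def wit2 (k i : Fin n) : Matrix (Fin n) (Fin n) ℝ :=
  Matrix.of fun r l => if l = k then (if r = i then -1 else 0) else (if r = l then -1 else 0)

lemma compMat_wit2 {k : Fin n} (i : Fin n) {α : Finset (Fin n)} (hk : k ∉ α) :
    compMat (wit2 k i) α = 1 := by
  ext r j
  by_cases hj : j ∈ α
  · have hjk : j ≠ k := fun h => hk (h ▸ hj)
    simp only [compMat, Matrix.of_apply, if_pos hj, wit2, if_neg hjk, Matrix.one_apply]
    split_ifs <;> simp
  · simp [compMat, hj]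

lemma matB_wit2 {k : Fin n} (i : Fin n) {α : Finset (Fin n)} (hk : k ∉ α) :
    matB (wit2 k i) k α i = 1 := by
  rw [matB, compMat_wit2 i hk]
  have hcol : (fun r => -(wit2 k i) r k) = fun r => (1 : Matrix (Fin n) (Fin n) ℝ) r i := by
    funext r
    simp only [wit2, Matrix.of_apply, if_pos rfl, Matrix.one_apply]
    split_ifs <;> simp
  rw [hcol]
  exact Matrix.updateCol_eq_self 1 i

lemma cont_entry (i j : Fin n) : Continuous fun M : Matrix (Fin n) (Fin n) ℝ => M i j :=
  (continuous_apply j).comp (continuous_apply i)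

lemma cont_compMat_det (α : Finset (Fin n)) :
    Continuous fun M : Matrix (Fin n) (Fin n) ℝ => (compMat M α).det := by
  apply Continuous.matrix_det
  apply continuous_matrix
  intro i j
  simp only [compMat, Matrix.of_apply]
  split_ifs
  · exact (cont_entry i j).neg
  · exact continuous_const

lemma cont_matB_det (k : Fin n) (α : Finset (Fin n)) (i : Fin n) :
    Continuous fun M : Matrix (Fin n) (Fin n) ℝ => (matB M k α i).det := by
  apply Continuous.matrix_det
  apply continuous_matrix
  intro r j
  simp only [matB, Matrix.updateCol_apply, compMat, Matrix.of_apply]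
  split_ifs
  · exact (cont_entry r k).neg
  · exact (cont_entry r j).neg
  · exact continuous_const

lemma eval_compMat_det (M D : Matrix (Fin n) (Fin n) ℝ) (α : Finset (Fin n)) (t : ℝ) :
    eval t (compMatP (linPoly M D) α).det = (compMat (M + t • D) α).det := by
  rw [aux_eval_det, map_compMatP, map_linPoly]

lemma eval_matB_det (M D : Matrix (Fin n) (Fin n) ℝ) (k : Fin n) (α : Finset (Fin n))
    (i : Fin n) (t : ℝ) :
    eval t ((compMatP (linPoly M D) α).updateCol i fun r => -(linPoly M D r k)).det =
      (matB (M + t • D) k α i).det := by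
  have hcol : (fun r => eval t (-(linPoly M D r k))) = fun r => -(M + t • D) r k := by
    funext r
    rw [eval_neg, ← Matrix.map_apply (f := eval t), map_linPoly]
  rw [aux_eval_det, map_updateCol, map_compMatP, map_linPoly, hcol, matB]

lemma dense1 (α : Finset (Fin n)) :
    Dense {M : Matrix (Fin n) (Fin n) ℝ | (compMat M α).det ≠ 0} := by
  apply aux_dense_ne_zero
  intro M
  refine ⟨-1 - M, (compMatP (linPoly M (-1 - M)) α).det, ?_, fun t => eval_compMat_det M _ α t⟩
  intro h0
  have h1 : eval 1 (compMatP (linPoly M (-1 - M)) α).det = 1 := by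
    rw [eval_compMat_det]
    have : M + (1 : ℝ) • (-1 - M) = -1 := by rw [one_smul]; abel
    rw [this, compMat_neg_one, Matrix.det_one]
  rw [h0] at h1
  simp at h1

lemma dense2 {k : Fin n} (α : Finset (Fin n)) (i : Fin n) (hk : k ∉ α) :
    Dense {M : Matrix (Fin n) (Fin n) ℝ | (matB M k α i).det ≠ 0} := by
  apply aux_dense_ne_zero
  intro M
  refine ⟨wit2 k i - M,
    ((compMatP (linPoly M (wit2 k i - M)) α).updateCol i fun r =>
      -(linPoly M (wit2 k i - M) r k)).det, ?_, fun t => eval_matB_det M _ k α i t⟩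
  intro h0
  have h1 : eval 1 ((compMatP (linPoly M (wit2 k i - M)) α).updateCol i fun r =>
      -(linPoly M (wit2 k i - M) r k)).det = 1 := by
    rw [eval_matB_det]
    have : M + (1 : ℝ) • (wit2 k i - M) = wit2 k i := by rw [one_smul]; abel
    rw [this, matB_wit2 i hk, Matrix.det_one]
  rw [h0] at h1
  simp at h1

end Main

/-- the set of weakly degenerate matrices is nowhere dense in `ℝ^{n×n}`. -/
theorem stmt10 {n : ℕ} :
    IsNowhereDense { M : Matrix (Fin n) (Fin n) ℝ | weaklyDegenerate M } := by
  classical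
  let ι := Finset (Fin n) ⊕ {x : Fin n × Finset (Fin n) × Fin n // x.1 ∉ x.2.1}
  let g : ι → Set (Matrix (Fin n) (Fin n) ℝ) := fun i =>
    match i with
    | Sum.inl α => {M | (compMat M α).det = 0}
    | Sum.inr x => {M | (matB M x.1.1 x.1.2.1 x.1.2.2).det = 0}
  have hZc : ∀ i, IsClosed (g i) := by
    rintro (α | x)
    · exact isClosed_eq (cont_compMat_det α) continuous_const
    · exact isClosed_eq (cont_matB_det x.1.1 x.1.2.1 x.1.2.2) continuous_const
  have hsub : {M : Matrix (Fin n) (Fin n) ℝ | weaklyDegenerate M} ⊆ ⋃ i, g i := by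
    intro M hM
    rcases hM with ⟨α, hα⟩ | ⟨k, α, i, hk, hmem⟩
    · exact mem_iUnion.2 ⟨Sum.inl α, by simpa [g, isUnit_iff_ne_zero, not_not] using hα⟩
    · exact mem_iUnion.2 ⟨Sum.inr ⟨(k, α, i), hk⟩, facet_det_zero hmem⟩
  have hZclosed : IsClosed (⋃ i, g i) := isClosed_iUnion_of_finite hZc
  have hdense : Dense (⋃ i, g i)ᶜ := by
    rw [compl_iUnion]
    apply aux_dense_iInter
    · exact fun i => (hZc i).isOpen_compl
    · rintro (α | x)
      · have : (g (Sum.inl α))ᶜ = {M : Matrix (Fin n) (Fin n) ℝ | (compMat M α).det ≠ 0} := by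
          ext M; simp [g]
        rw [this]; exact dense1 α
      · have : (g (Sum.inr x))ᶜ =
            {M : Matrix (Fin n) (Fin n) ℝ | (matB M x.1.1 x.1.2.1 x.1.2.2).det ≠ 0} := by
          ext M; simp [g]
        rw [this]; exact dense2 x.1.2.1 x.1.2.2 x.2
  have hint : interior (⋃ i, g i) = ∅ := interior_eq_empty_iff_dense_compl.2 hdense
  have hcl : closure {M : Matrix (Fin n) (Fin n) ℝ | weaklyDegenerate M} ⊆ ⋃ i, g i :=
    closure_minimal hsub hZclosed
  have := interior_mono hcl
  rw [hint, subset_empty_iff] at this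
  exact this
end

section
/- The set of matrices M ∈ ℝ^{n×n} such that some complementary matrix C_M(α) is singular is nowhere dense in ℝ^{n×n}. -/
open Matrix Set

open Polynomial in
/-- Determinant of the complementary matrix is the determinant of `-M` restricted to `α`. -/
lemma compMat_det_aux {n : ℕ} (N : Matrix (Fin n) (Fin n) ℝ) (α : Finset (Fin n)) :
    (compMat N α).det =
      (-(N.submatrix (Subtype.val : {i : Fin n // i ∈ α} → Fin n) Subtype.val)).det := by
  classical
  let e : {i : Fin n // i ∈ α} ⊕ {i : Fin n // ¬ i ∈ α} ≃ Fin n :=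
    Equiv.sumCompl (fun i => i ∈ α)
  rw [← Matrix.det_submatrix_equiv_self e]
  have h : (compMat N α).submatrix e e =
      Matrix.fromBlocks
        (-(N.submatrix (Subtype.val : {i : Fin n // i ∈ α} → Fin n) Subtype.val)) 0
        (-(N.submatrix (Subtype.val : {i : Fin n // ¬ i ∈ α} → Fin n) Subtype.val)) 1 := by
    ext i j
    rcases i with i | i <;> rcases j with j | j <;>
      simp [e, compMat, Matrix.one_apply, Subtype.val_inj, j.2, i.2]
    · exact fun h => (j.2 (h ▸ i.2)).elim
  rw [h, Matrix.det_fromBlocks_zero₁₂, Matrix.det_one, mul_one]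

open Polynomial in
/-- `t ↦ det (t • 1 + A)` is given by a nonzero polynomial. -/
lemma exists_poly_det {m : Type*} [Fintype m] [DecidableEq m] (A : Matrix m m ℝ) :
    ∃ P : ℝ[X], P ≠ 0 ∧ ∀ t : ℝ, P.eval t = (t • (1 : Matrix m m ℝ) + A).det := by
  refine ⟨(-A).charpoly, (Matrix.charpoly_monic _).ne_zero, fun t => ?_⟩
  have : ((charmatrix (-A)).map (evalRingHom t)) = t • (1 : Matrix m m ℝ) + A := by
    ext i j
    by_cases h : i = j
    · subst h; simp [charmatrix_apply_eq, Matrix.one_apply]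
    · simp [charmatrix_apply_ne _ _ _ h, Matrix.one_apply, h]
  rw [Matrix.charpoly, ← this]
  exact RingHom.map_det (evalRingHom t) (charmatrix (-A))

/-- the set of matrices having a singular complementary matrix is nowhere
dense in `ℝ^{n×n}`. -/
theorem stmt11 {n : ℕ} :
    IsNowhereDense { M : Matrix (Fin n) (Fin n) ℝ |
      ∃ α : Finset (Fin n), ¬ IsUnit (compMat M α).det } := by
  classical
  set S := { M : Matrix (Fin n) (Fin n) ℝ |
      ∃ α : Finset (Fin n), ¬ IsUnit (compMat M α).det } with hSdef
  have hS : S = ⋃ α : Finset (Fin n), { M | (compMat M α).det = 0 } := by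
    ext M
    simp [hSdef, isUnit_iff_ne_zero]
  -- S is closed
  have hclosed : IsClosed S := by
    rw [hS]
    refine isClosed_iUnion_of_finite fun α => ?_
    have hcont : Continuous fun M : Matrix (Fin n) (Fin n) ℝ => (compMat M α).det := by
      refine Continuous.matrix_det (continuous_matrix fun i j => ?_)
      by_cases h : j ∈ α <;>
        simp only [compMat, Matrix.of_apply, h, if_true, if_false]
      · exact (Continuous.matrix_elem continuous_id i j).neg
      · exact continuous_const
    exact isClosed_singleton.preimage hcont
  -- the complement of S is dense
  have hdense : Dense Sᶜ := by
    intro M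
    -- root sets
    choose P hP0 hPeval using fun α : Finset (Fin n) =>
      exists_poly_det (M.submatrix (Subtype.val : {i : Fin n // i ∈ α} → Fin n) Subtype.val)
    have hRfin : (⋃ α : Finset (Fin n), { t : ℝ | (P α).IsRoot t }).Finite :=
      Set.finite_iUnion fun α => (P α).finite_setOf_isRoot (hP0 α)
    set R := ⋃ α : Finset (Fin n), { t : ℝ | (P α).IsRoot t } with hRdef
    have hRopen : IsOpen (R \ {0})ᶜ := ((hRfin.subset Set.diff_subset).isClosed).isOpen_compl
    have hmem : (R \ {0})ᶜ ∈ nhds (0 : ℝ) := hRopen.mem_nhds (by simp)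
    have hev : ∀ᶠ t : ℝ in nhdsWithin 0 {(0 : ℝ)}ᶜ, M + t • 1 ∈ Sᶜ := by
      filter_upwards [eventually_nhdsWithin_of_eventually_nhds
        (Filter.eventually_of_mem hmem fun t ht => ht), self_mem_nhdsWithin] with t htR ht0
      have htnotR : t ∉ R := fun h => htR ⟨h, ht0⟩
      intro hMS
      obtain ⟨α, hα⟩ := hMS
      apply hα
      rw [isUnit_iff_ne_zero, compMat_det_aux]
      have hsub : ((M + t • 1).submatrix
          (Subtype.val : {i : Fin n // i ∈ α} → Fin n) Subtype.val) =
          M.submatrix (Subtype.val : {i : Fin n // i ∈ α} → Fin n) Subtype.val +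
            t • (1 : Matrix {i : Fin n // i ∈ α} {i : Fin n // i ∈ α} ℝ) := by
        ext i j
        simp [Matrix.submatrix_apply, Matrix.one_apply, Subtype.val_inj]
      rw [hsub, Matrix.det_neg]
      have hne : (t • (1 : Matrix {i : Fin n // i ∈ α} {i : Fin n // i ∈ α} ℝ) +
          M.submatrix Subtype.val Subtype.val).det ≠ 0 := by
        rw [← hPeval α t]
        exact fun h => htnotR (Set.mem_iUnion.2 ⟨α, h⟩)
      rw [add_comm] at hne
      exact mul_ne_zero (pow_ne_zero _ (by norm_num : (-1 : ℝ) ≠ 0)) hne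
    have htend : Filter.Tendsto (fun t : ℝ => M + t • (1 : Matrix (Fin n) (Fin n) ℝ))
        (nhdsWithin 0 {(0 : ℝ)}ᶜ) (nhds M) := by
      have : Continuous fun t : ℝ => M + t • (1 : Matrix (Fin n) (Fin n) ℝ) :=
        continuous_const.add (continuous_id.smul continuous_const)
      have h0 := (this.tendsto 0).mono_left
        (nhdsWithin_le_nhds : nhdsWithin (0 : ℝ) {(0 : ℝ)}ᶜ ≤ nhds 0)
      simpa using h0
    exact mem_closure_of_tendsto htend hev
  exact (isClosed_isNowhereDense_iff_compl.mpr ⟨hclosed.isOpen_compl, hdense⟩).2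
end

section
/- Let M ∈ ℝ^{n×n} be an R₀ matrix and let Q¹,…,Q^r be the connected components of ℝ^n \ K(M), where K(M) is the union of all facets of the complementary cones of M. Then for every α ⊆ {1,…,n}: if pos C_M(α) has nonempty interior there exists J ⊆ {1,…,r} with pos C_M(α) = closure(⋃_{j∈J} Q^j); and if pos C_M(α) has empty interior then pos C_M(α) ⊆ ⋃_{j∈J} ∂Q^j for some J ⊆ {1,…,r}. -/
open Matrix Set

/-- `K(M)`: the union of all facets of all complementary cones of `M`. -/
def Kset {n : ℕ} (M : Matrix (Fin n) (Fin n) ℝ) : Set (Fin n → ℝ) :=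
  ⋃ (α : Finset (Fin n)) (i : Fin n), facet M α i

/-- The family of connected components (cells) of `ℝⁿ \ K(M)`. -/
def cells {n : ℕ} (M : Matrix (Fin n) (Fin n) ℝ) : Set (Set (Fin n → ℝ)) :=
  { Q | ∃ x ∈ (Kset M)ᶜ, Q = connectedComponentIn (Kset M)ᶜ x }

lemma mem_facet_of {n : ℕ} (M : Matrix (Fin n) (Fin n) ℝ) (α : Finset (Fin n)) (p : Fin n → ℝ)
    (hp : ∀ j, 0 ≤ p j) (i : Fin n) (hpi : p i = 0) :
    (compMat M α).mulVec p ∈ facet M α i := by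
  classical
  refine ⟨fun j => p j, fun j => hp j, ?_⟩
  funext r
  have h1 : ∀ x : Fin n, x ∈ ({i}ᶜ : Finset (Fin n)) ↔ x ≠ i := by
    intro x; simp
  show (compMat M α).mulVec p r = _
  simp only [Matrix.mulVec, dotProduct, Matrix.of_apply]
  calc ∑ j, compMat M α r j * p j
      = ∑ j ∈ ({i}ᶜ : Finset (Fin n)), compMat M α r j * p j
        + ∑ j ∈ ({i} : Finset (Fin n)), compMat M α r j * p j :=
        (Finset.sum_compl_add_sum _ _).symm
    _ = ∑ j : {j : Fin n // j ≠ i}, compMat M α r (j : Fin n) * p (j : Fin n) := by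
        rw [Finset.sum_singleton, hpi, mul_zero, add_zero,
          Finset.sum_subtype _ h1 (fun j => compMat M α r j * p j)]

lemma exists_functional {n : ℕ} (M : Matrix (Fin n) (Fin n) ℝ) (β : Finset (Fin n)) (i : Fin n) :
    ∃ f : (Fin n → ℝ) →ₗ[ℝ] ℝ, f ≠ 0 ∧ ∀ x ∈ facet M β i, f x = 0 := by
  classical
  set g := (Matrix.of fun r (j : {j : Fin n // j ≠ i}) => compMat M β r (j : Fin n)).mulVecLin
    with hg
  have hsub : facet M β i ⊆ (LinearMap.range g : Set (Fin n → ℝ)) := by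
    rintro x ⟨q, hq, rfl⟩
    exact ⟨q, by simp [hg, Matrix.mulVecLin_apply]⟩
  have hlt : LinearMap.range g < ⊤ := by
    rw [lt_top_iff_ne_top]
    intro htop
    have h1 := LinearMap.finrank_range_le g
    rw [htop, finrank_top] at h1
    have h2 : Module.finrank ℝ (Fin n → ℝ) = n := by simp [Module.finrank_pi]
    have h3 : Module.finrank ℝ ({j : Fin n // j ≠ i} → ℝ) = Fintype.card {j : Fin n // j ≠ i} := by
      simp [Module.finrank_pi]
    have h4 : Fintype.card {j : Fin n // j ≠ i} < n := by
      have := Fintype.card_subtype_lt (p := fun j : Fin n => j ≠ i) (x := i) (by simp)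
      simpa using this
    omega
  obtain ⟨f, hf0, hker⟩ := Submodule.exists_dual_map_eq_bot_of_lt_top hlt inferInstance
  refine ⟨f, hf0, fun x hx => ?_⟩
  have h5 : f x ∈ Submodule.map f (LinearMap.range g) := Submodule.mem_map_of_mem (hsub hx)
  rw [hker, Submodule.mem_bot] at h5
  exact h5

lemma orthant_isClosed {n : ℕ} : IsClosed {p : Fin n → ℝ | ∀ i, 0 ≤ p i} := by
  have : {p : Fin n → ℝ | ∀ i, 0 ≤ p i} = Set.pi univ (fun _ => Ici (0:ℝ)) := by
    ext p; simp [Set.mem_pi, Pi.le_def]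
  rw [this]
  exact isClosed_set_pi (fun i _ => isClosed_Ici)

lemma orthant_interior {n : ℕ} :
    interior {p : Fin n → ℝ | ∀ i, 0 ≤ p i} = {p : Fin n → ℝ | ∀ i, 0 < p i} := by
  have h1 : {p : Fin n → ℝ | ∀ i, 0 ≤ p i} = Set.pi univ (fun _ => Ici (0:ℝ)) := by
    ext p; simp [Set.mem_pi, Pi.le_def]
  rw [h1, interior_pi_set finite_univ]
  ext p; simp [Set.mem_pi]

lemma orthant_pos_isOpen {n : ℕ} : IsOpen {p : Fin n → ℝ | ∀ i, 0 < p i} := by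
  rw [← orthant_interior]; exact isOpen_interior


set_option maxHeartbeats 2000000 in
/-- for an `R₀` matrix `M`, every solid complementary cone is the closure of a
union of cells of the partition induced by `M`, and every complementary cone with empty
interior is contained in a union of cell boundaries. -/
theorem stmt17 {n : ℕ} (M : Matrix (Fin n) (Fin n) ℝ) (hM : isR0 M) (α : Finset (Fin n)) :
    ((interior (posCone (compMat M α))).Nonempty →
      ∃ Q ⊆ cells M, posCone (compMat M α) = closure (⋃₀ Q)) ∧
    (interior (posCone (compMat M α)) = ∅ →
      ∃ Q ⊆ cells M, posCone (compMat M α) ⊆ ⋃ C ∈ Q, frontier C) := by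
  classical
  set A := compMat M α with hAdef
  -- the separating functionals
  choose f hf0 hfK using fun (βi : Finset (Fin n) × Fin n) => exists_functional M βi.1 βi.2
  set U : Set (Fin n → ℝ) := ⋂ βi, ((LinearMap.ker (f βi) : Set (Fin n → ℝ)))ᶜ with hUdef
  have hker_set : ∀ βi, (LinearMap.ker (f βi) : Set (Fin n → ℝ)) = (f βi) ⁻¹' {0} := by
    intro βi; ext x; simp [LinearMap.mem_ker]
  have hker_closed : ∀ βi, IsClosed (LinearMap.ker (f βi) : Set (Fin n → ℝ)) := by
    intro βi
    rw [hker_set βi]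
    exact IsClosed.preimage (f βi).continuous_of_finiteDimensional isClosed_singleton
  have hker_int : ∀ βi, interior (LinearMap.ker (f βi) : Set (Fin n → ℝ)) = ∅ := by
    intro βi
    by_contra h
    have h2 : LinearMap.ker (f βi) = ⊤ :=
      Submodule.eq_top_of_nonempty_interior' _ (nonempty_iff_ne_empty.mpr h)
    exact hf0 βi (LinearMap.ker_eq_top.mp h2)
  have hUdense : Dense U := by
    apply dense_iInter_of_isOpen
    · exact fun βi => (hker_closed βi).isOpen_compl
    · intro βi
      rw [← interior_eq_empty_iff_dense_compl]
      exact hker_int βi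
  have hUK : U ⊆ (Kset M)ᶜ := by
    intro x hx hxK
    simp only [Kset, mem_iUnion] at hxK
    obtain ⟨β, i, hfac⟩ := hxK
    have hx2 := mem_iInter.mp hx (β, i)
    exact hx2 (by simp only [SetLike.mem_coe, LinearMap.mem_ker]; exact hfK (β, i) x hfac)
  -- membership of the cone as image
  have hconePC : ∀ x, x ∈ posCone A ↔ ∃ p : Fin n → ℝ, (∀ j, 0 ≤ p j) ∧ x = A.mulVec p :=
    fun x => Iff.rfl
  constructor
  · -- PART 1
    rintro ⟨z, hz⟩
    set L := A.mulVecLin with hL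
    have hsurj : Function.Surjective L := by
      rw [← LinearMap.range_eq_top]
      apply Submodule.eq_top_of_nonempty_interior'
      refine ⟨z, interior_mono ?_ hz⟩
      rintro x ⟨p, hp, rfl⟩
      exact ⟨p, by simp [hL, Matrix.mulVecLin_apply]⟩
    have hbij : Function.Bijective L := ⟨LinearMap.injective_iff_surjective.mpr hsurj, hsurj⟩
    set e := LinearEquiv.ofBijective L hbij with he
    set h := e.toContinuousLinearEquiv.toHomeomorph with hh
    have hhx : ∀ p, h p = A.mulVec p := fun p => rfl
    set O : Set (Fin n → ℝ) := {p | ∀ i, 0 ≤ p i} with hO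
    have hOcone : posCone A = h '' O := by
      ext x
      constructor
      · rintro ⟨p, hp, rfl⟩; exact ⟨p, hp, (hhx p).symm ▸ rfl⟩
      · rintro ⟨p, hp, rfl⟩; exact ⟨p, hp, (hhx p).symm⟩
    have hclosed : IsClosed (posCone A) := by
      rw [hOcone]; exact (Homeomorph.isClosedMap h) _ orthant_isClosed
    have hint : interior (posCone A) = h '' {p | ∀ i, 0 < p i} := by
      rw [hOcone, ← Homeomorph.image_interior, orthant_interior]
    have hfr : frontier (posCone A) ⊆ Kset M := by
      intro x hx
      rw [frontier, hclosed.closure_eq, hint, hOcone] at hx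
      obtain ⟨⟨p, hp, rfl⟩, hnot⟩ := hx
      have hex : ∃ i, p i = 0 := by
        by_contra hc
        push_neg at hc
        exact hnot ⟨p, fun i => lt_of_le_of_ne (hp i) (Ne.symm (hc i)), rfl⟩
      obtain ⟨i, hi⟩ := hex
      have hmem := mem_facet_of M α p hp i hi
      rw [← hhx p] at hmem
      simp only [Kset, mem_iUnion]
      exact ⟨α, i, hmem⟩
    have hconv : Convex ℝ (posCone A) := by
      rintro x ⟨p, hp, rfl⟩ y ⟨q, hq, rfl⟩ a b ha hb hab
      refine ⟨a • p + b • q, fun j => ?_, ?_⟩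
      · have : (a • p + b • q) j = a * p j + b * q j := by
          simp [Pi.add_apply, Pi.smul_apply, smul_eq_mul]
        rw [this]
        exact add_nonneg (mul_nonneg ha (hp j)) (mul_nonneg hb (hq j))
      · rw [Matrix.mulVec_add, Matrix.mulVec_smul, Matrix.mulVec_smul]
    refine ⟨{C | C ∈ cells M ∧ C ⊆ posCone A}, fun C hC => hC.1, ?_⟩
    apply Subset.antisymm
    · -- posCone ⊆ closure ⋃₀ Q
      have h1 : posCone A ⊆ closure (interior (posCone A)) := by
        intro x hx
        have hzi : x + (z - x) ∈ interior (posCone A) := by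
          rw [add_sub_cancel]; exact hz
        have hmem : ∀ t : ℝ, t ∈ Ioc (0:ℝ) 1 →
            x + t • (z - x) ∈ interior (posCone A) := fun t ht =>
          hconv.add_smul_mem_interior hx hzi ht
        have hcont : Continuous (fun t : ℝ => x + t • (z - x)) := by continuity
        have h0cl : (0:ℝ) ∈ closure (Ioc (0:ℝ) 1) := by
          rw [closure_Ioc one_ne_zero.symm]
          exact ⟨le_refl 0, zero_le_one⟩
        have hnb : (nhdsWithin (0:ℝ) (Ioc (0:ℝ) 1)).NeBot :=
          mem_closure_iff_nhdsWithin_neBot.mp h0cl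
        have htends : Filter.Tendsto (fun t : ℝ => x + t • (z - x))
            (nhdsWithin (0:ℝ) (Ioc (0:ℝ) 1)) (nhds x) := by
          have := (hcont.tendsto 0).mono_left
            (nhdsWithin_le_nhds : nhdsWithin (0:ℝ) (Ioc (0:ℝ) 1) ≤ nhds 0)
          simpa using this
        exact mem_closure_of_tendsto htends
          (Filter.eventually_of_mem self_mem_nhdsWithin (fun t ht => hmem t ht))
      have h2 : interior (posCone A) ⊆ closure (interior (posCone A) ∩ U) :=
        hUdense.open_subset_closure_inter isOpen_interior
      have h3 : interior (posCone A) ∩ U ⊆ ⋃₀ {C | C ∈ cells M ∧ C ⊆ posCone A} := by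
        rintro y ⟨hy1, hy2⟩
        have hyK : y ∈ (Kset M)ᶜ := hUK hy2
        refine ⟨connectedComponentIn (Kset M)ᶜ y, ⟨⟨y, hyK, rfl⟩, ?_⟩,
          mem_connectedComponentIn hyK⟩
        have hCpre : IsPreconnected (connectedComponentIn (Kset M)ᶜ y) :=
          isPreconnected_connectedComponentIn
        have hsub2 : connectedComponentIn (Kset M)ᶜ y ⊆
            interior (posCone A) ∪ (closure (posCone A))ᶜ := by
          intro w hw
          by_cases hwi : w ∈ interior (posCone A)
          · exact Or.inl hwi
          · refine Or.inr fun hwc => ?_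
            have : w ∈ frontier (posCone A) := ⟨hwc, hwi⟩
            exact (connectedComponentIn_subset _ _ hw) (hfr this)
        have hdisj : Disjoint (interior (posCone A)) (closure (posCone A))ᶜ :=
          disjoint_compl_right.mono_left interior_subset_closure
        have hres := hCpre.subset_left_of_subset_union isOpen_interior
          isClosed_closure.isOpen_compl hdisj hsub2
          ⟨y, mem_connectedComponentIn hyK, hy1⟩
        exact hres.trans interior_subset
      calc posCone A ⊆ closure (interior (posCone A)) := h1
        _ ⊆ closure (closure (interior (posCone A) ∩ U)) := closure_mono h2
        _ = closure (interior (posCone A) ∩ U) := closure_closure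
        _ ⊆ closure (⋃₀ {C | C ∈ cells M ∧ C ⊆ posCone A}) := closure_mono h3
    · exact closure_minimal (sUnion_subset fun C hC => hC.2) hclosed
  · -- PART 2
    intro hI
    refine ⟨cells M, subset_rfl, ?_⟩
    have hKfr : Kset M ⊆ ⋃ C ∈ cells M, frontier C := by
      intro x hx
      obtain ⟨v, hv⟩ := hUdense.nonempty
      have hvne : ∀ βi, f βi v ≠ 0 := by
        intro βi
        have := mem_iInter.mp hv βi
        simpa [LinearMap.mem_ker] using this
      set T : Finset ℝ :=
        ((Finset.univ.image (fun βi : Finset (Fin n) × Fin n => -f βi x / f βi v)).filter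
          (fun t => 0 < t)) ∪ {1} with hT
      have hTne : T.Nonempty := ⟨1, by simp [hT]⟩
      set ε := T.min' hTne with hεdef
      have hε : 0 < ε := by
        have hmem := T.min'_mem hTne
        rcases Finset.mem_union.mp hmem with h | h
        · exact (Finset.mem_filter.mp h).2
        · rw [Finset.mem_singleton] at h
          rw [← hεdef] at h
          rw [h]; exact one_pos
      have hseg : ∀ t : ℝ, 0 < t → t < ε → (x + t • v) ∈ U := by
        intro t ht htε
        rw [hUdef, mem_iInter]
        intro βi
        intro hker
        have h0 : f βi (x + t • v) = 0 := by
          simpa [LinearMap.mem_ker] using hker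
        have heq : f βi x + t * f βi v = 0 := by
          simpa [map_add, _root_.map_smul, smul_eq_mul] using h0
        have ht0 : t = -f βi x / f βi v := by
          rw [eq_div_iff (hvne βi)]
          linarith
        have htT : t ∈ T := by
          rw [hT]
          apply Finset.mem_union_left
          rw [Finset.mem_filter]
          exact ⟨Finset.mem_image.mpr ⟨βi, Finset.mem_univ βi, ht0.symm⟩, ht⟩
        exact absurd (T.min'_le t htT) (not_le.mpr htε)
      set y := x + (ε/2) • v with hy
      have hyU : y ∈ U := hseg _ (half_pos hε) (half_lt_self hε)
      have hyK : y ∈ (Kset M)ᶜ := hUK hyU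
      set S : Set (Fin n → ℝ) := (fun t : ℝ => x + t • v) '' Ioo 0 ε with hS
      have hcont : Continuous (fun t : ℝ => x + t • v) := by continuity
      have hScon : IsPreconnected S := isPreconnected_Ioo.image _ hcont.continuousOn
      have hSsub : S ⊆ (Kset M)ᶜ := by
        rintro _ ⟨t, ⟨ht1, ht2⟩, rfl⟩
        exact hUK (hseg t ht1 ht2)
      have hySC : y ∈ S := ⟨ε/2, ⟨half_pos hε, half_lt_self hε⟩, rfl⟩
      have hSC : S ⊆ connectedComponentIn (Kset M)ᶜ y :=
        hScon.subset_connectedComponentIn hySC hSsub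
      have hxcl : x ∈ closure S := by
        have h0cl : (0:ℝ) ∈ closure (Ioo 0 ε) := by
          rw [closure_Ioo hε.ne]
          exact ⟨le_refl 0, hε.le⟩
        have hnb : (nhdsWithin (0:ℝ) (Ioo 0 ε)).NeBot :=
          mem_closure_iff_nhdsWithin_neBot.mp h0cl
        have htends : Filter.Tendsto (fun t : ℝ => x + t • v)
            (nhdsWithin (0:ℝ) (Ioo 0 ε)) (nhds x) := by
          have := (hcont.tendsto 0).mono_left
            (nhdsWithin_le_nhds : nhdsWithin (0:ℝ) (Ioo 0 ε) ≤ nhds 0)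
          simpa using this
        exact mem_closure_of_tendsto htends
          (Filter.eventually_of_mem self_mem_nhdsWithin
            (fun t ht => mem_image_of_mem _ ht))
      have hxfr : x ∈ frontier (connectedComponentIn (Kset M)ᶜ y) := by
        refine ⟨closure_mono hSC hxcl, fun hxint => ?_⟩
        exact (connectedComponentIn_subset _ _ (interior_subset hxint)) hx
      exact mem_biUnion ⟨y, hyK, rfl⟩ hxfr
    -- posCone ⊆ Kset
    intro x hxP
    apply hKfr
    have hninj : ¬ Function.Injective A.mulVecLin := by
      intro hinj
      have hsurj := LinearMap.injective_iff_surjective.mp hinj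
      set e := LinearEquiv.ofBijective A.mulVecLin ⟨hinj, hsurj⟩ with he
      set h := e.toContinuousLinearEquiv.toHomeomorph with hh
      have hhx : ∀ p, h p = A.mulVec p := fun p => rfl
      have himg : h '' {p : Fin n → ℝ | ∀ i, 0 < p i} ⊆ posCone A := by
        rintro w ⟨p, hp, rfl⟩
        exact ⟨p, fun i => (hp i).le, (hhx p).symm ▸ rfl⟩
      have hio : h '' {p : Fin n → ℝ | ∀ i, 0 < p i} ⊆ interior (posCone A) :=
        interior_maximal himg ((Homeomorph.isOpenMap h) _ orthant_pos_isOpen)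
      have hne : (interior (posCone A)).Nonempty :=
        ⟨h (fun _ => 1), hio ⟨fun _ => 1, fun i => one_pos, rfl⟩⟩
      rw [hI] at hne
      exact not_nonempty_empty hne
    rw [← LinearMap.ker_eq_bot] at hninj
    obtain ⟨c₀, hc₀ker, hc₀0⟩ := Submodule.ne_bot_iff _ |>.mp hninj
    have hc₀A : A.mulVec c₀ = 0 := by
      have := LinearMap.mem_ker.mp hc₀ker
      simpa [Matrix.mulVecLin_apply] using this
    obtain ⟨c, hcA, j₁, hj₁⟩ : ∃ c : Fin n → ℝ, A.mulVec c = 0 ∧ ∃ j, 0 < c j := by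
      obtain ⟨j, hj⟩ := Function.ne_iff.mp hc₀0
      rcases lt_or_gt_of_ne hj with hlt | hgt
      · refine ⟨-c₀, by rw [Matrix.mulVec_neg, hc₀A, neg_zero], j, ?_⟩
        simpa using hlt
      · exact ⟨c₀, hc₀A, j, hgt⟩
    obtain ⟨p, hp, rfl⟩ := hxP
    set Sf := Finset.univ.filter (fun j => 0 < c j) with hSf
    have hSfne : Sf.Nonempty := ⟨j₁, by simp [hSf, hj₁]⟩
    obtain ⟨j0, hj0S, hj0⟩ := Finset.exists_mem_eq_inf' hSfne (fun j => p j / c j)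
    have hj0pos : 0 < c j0 := by
      have := Finset.mem_filter.mp hj0S
      exact this.2
    have hmin : ∀ j, 0 < c j → p j0 / c j0 ≤ p j / c j := by
      intro j hcj
      rw [← hj0]
      exact Finset.inf'_le _ (by simp [hSf, hcj])
    have ht0 : 0 ≤ p j0 / c j0 := div_nonneg (hp j0) hj0pos.le
    set p' := p - (p j0 / c j0) • c with hp'def
    have hp' : ∀ j, 0 ≤ p' j := by
      intro j
      have hval : p' j = p j - (p j0 / c j0) * c j := by
        simp [hp'def, Pi.sub_apply, Pi.smul_apply, smul_eq_mul]
      by_cases hcj : 0 < c j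
      · have hle := hmin j hcj
        have h6 := (le_div_iff₀ hcj).mp hle
        rw [hval]
        linarith
      · push_neg at hcj
        have : (p j0 / c j0) * c j ≤ 0 := mul_nonpos_of_nonneg_of_nonpos ht0 hcj
        rw [hval]; linarith [hp j]
    have hp'0 : p' j0 = 0 := by
      have hval : p' j0 = p j0 - (p j0 / c j0) * c j0 := by
        simp [hp'def, Pi.sub_apply, Pi.smul_apply, smul_eq_mul]
      rw [hval, div_mul_cancel₀ _ hj0pos.ne', sub_self]
    have hEq : A.mulVec p' = A.mulVec p := by
      rw [hp'def, Matrix.mulVec_sub, Matrix.mulVec_smul, hcA, smul_zero, sub_zero]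
    have hmem := mem_facet_of M α p' hp' j0 hp'0
    rw [hEq] at hmem
    simp only [Kset, mem_iUnion]
    exact ⟨α, j0, hmem⟩
end
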